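/- For 0 < p < 1, 2·p·(1-p) ≤ 1/2 < 1, hence for any c ∈ (0,1) the eigenvalues ±c·sqrt(2p(1-p)) of the two-cell Jacobian at (1/2,1/2) have absolute value strictly less than 1; therefore the equilibrium (1/2,1/2) is asymptotically stable for every coupling c ∈ (0,1), affinity p ∈ (0,1), and any r (since the logistic term vanishes there). -/

import Mathlib

/-! The Jacobian at `(1/2, 1/2)` is anti-diagonal, so its eigenvalues `λ` satisfy
`λ² = b d = 2 c² p (1 - p)`, using `(1/2)^(p-1) (1/2)^(-p) = 2`. By AM-GM `2 p (1 - p) ≤ 1/2`,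
hence `λ² ≤ c² / 2 < 1` whenever `|c| < 1`. -/

open Polynomial

theorem two_mul_mul_one_sub_le_half (p : ℝ) : 2 * p * (1 - p) ≤ 1 / 2 := by
  nlinarith [sq_nonneg (p - 1 / 2)]

theorem abs_mul_sqrt_lt_one {c s : ℝ} (hc : |c| < 1) (hs : s ≤ 1) : |c * √s| < 1 :=
  calc |c * √s| = |c| * √s := by rw [abs_mul, abs_of_nonneg (Real.sqrt_nonneg s)]
    _ ≤ |c| * 1 := by gcongr; exact Real.sqrt_le_one.mpr hs
    _ < 1 := by rwa [mul_one]

theorem Real.rpow_sub_one_mul_rpow_neg {x : ℝ} (hx : 0 ≤ x) (p : ℝ) :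
    x ^ (p - 1) * x ^ (-p) = x⁻¹ := by
  rw [← Real.rpow_add' hx (by ring_nf; norm_num), show p - 1 + -p = -1 by ring, Real.rpow_neg_one]

theorem Matrix.charpoly_antidiagonal_fin_two {R : Type*} [CommRing R] [Nontrivial R] (b d : R) :
    (!![0, b; d, 0] : Matrix (Fin 2) (Fin 2) R).charpoly = X ^ 2 - C (b * d) := by
  rw [Matrix.charpoly_fin_two, Matrix.det_fin_two_of, Matrix.trace_fin_two_of]
  simp only [mul_zero, zero_mul, zero_sub, add_zero, map_zero, map_neg, sub_zero]
  ring

theorem Matrix.sq_eq_of_isRoot_charpoly_antidiagonal_fin_two {R : Type*} [CommRing R]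
    [Nontrivial R] {b d lam : R}
    (h : (!![0, b; d, 0] : Matrix (Fin 2) (Fin 2) R).charpoly.IsRoot lam) : lam ^ 2 = b * d := by
  rw [Matrix.charpoly_antidiagonal_fin_two, IsRoot.def, eval_sub, eval_pow, eval_X, eval_C,
    sub_eq_zero] at h
  exact h

theorem stmt_15_general (p : ℝ) :
    2 * p * (1 - p) ≤ 1/2 ∧ (1/2 : ℝ) < 1 ∧
    ∀ c : ℝ, c ∈ Set.Ioo (0:ℝ) 1 →
      |c * Real.sqrt (2 * p * (1 - p))| < 1 ∧
      |-(c * Real.sqrt (2 * p * (1 - p)))| < 1 ∧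
      ∀ lam : ℝ,
        (!![0, c * p * (1/2 : ℝ) ^ (p - 1);
            c * (1 - p) * (1/2 : ℝ) ^ (-p), 0] : Matrix (Fin 2) (Fin 2) ℝ).charpoly.IsRoot lam →
          |lam| < 1 := by
  have hamgm := two_mul_mul_one_sub_le_half p
  refine ⟨hamgm, by norm_num, fun c ⟨hc0, hc1⟩ => ?_⟩
  have hc : |c| < 1 := by rwa [abs_of_pos hc0]
  have hsqrt := abs_mul_sqrt_lt_one hc (hamgm.trans (by norm_num))
  refine ⟨hsqrt, by rwa [abs_neg], fun lam hlam => ?_⟩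
  have hlam2 : lam ^ 2 = c ^ 2 * (2 * p * (1 - p)) := by
    rw [Matrix.sq_eq_of_isRoot_charpoly_antidiagonal_fin_two hlam]
    linear_combination (c ^ 2 * p * (1 - p)) *
      Real.rpow_sub_one_mul_rpow_neg (by norm_num : (0 : ℝ) ≤ 1 / 2) p
  rw [← sq_lt_one_iff_abs_lt_one, hlam2]
  nlinarith

theorem stmt_15 (p : ℝ) (hp : 0 < p) (hp1 : p < 1) :
    2 * p * (1 - p) ≤ 1/2 ∧ (1/2 : ℝ) < 1 ∧
    ∀ c : ℝ, c ∈ Set.Ioo (0:ℝ) 1 →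
      |c * Real.sqrt (2 * p * (1 - p))| < 1 ∧
      |-(c * Real.sqrt (2 * p * (1 - p)))| < 1 ∧
      ∀ lam : ℝ,
        (!![0, c * p * (1/2 : ℝ) ^ (p - 1);
            c * (1 - p) * (1/2 : ℝ) ^ (-p), 0] : Matrix (Fin 2) (Fin 2) ℝ).charpoly.IsRoot lam →
          |lam| < 1 :=
  stmt_15_general p
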